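/- Let q = 2^n (n ≥ 1). The subgroup H_q = {(b, I₂) : b ∈ F_q²} of AGL(2, q²) is a subgroup perfect code of AGL(2, q²): there exists an inverse-closed subset S of AGL(2,q²) \ {e} such that H_q is a perfect code of the Cayley graph Cay(AGL(2,q²), S). -/

import Mathlib

open Matrix

/-- The affine group `F² ⋊ GL₂(F)`: pairs `(v, m)` with multiplication
`(a, A)(b, B) = (a + Ab, AB)`. -/
@[ext]
structure Aff (F : Type*) [Field F] where
  v : Fin 2 → F
  m : GL (Fin 2) F

namespace Aff

variable {F : Type*} [Field F]

instance : Mul (Aff F) :=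
  ⟨fun g h => ⟨g.v + (g.m : Matrix (Fin 2) (Fin 2) F) *ᵥ h.v, g.m * h.m⟩⟩

instance : One (Aff F) := ⟨⟨0, 1⟩⟩

instance : Inv (Aff F) :=
  ⟨fun g => ⟨-(((g.m⁻¹ : GL (Fin 2) F) : Matrix (Fin 2) (Fin 2) F) *ᵥ g.v), g.m⁻¹⟩⟩

@[simp] lemma mul_v (g h : Aff F) :
    (g * h).v = g.v + (g.m : Matrix (Fin 2) (Fin 2) F) *ᵥ h.v := rfl
@[simp] lemma mul_m (g h : Aff F) : (g * h).m = g.m * h.m := rfl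
@[simp] lemma one_v : (1 : Aff F).v = 0 := rfl
@[simp] lemma one_m : (1 : Aff F).m = 1 := rfl
@[simp] lemma inv_v (g : Aff F) :
    (g⁻¹).v = -(((g.m⁻¹ : GL (Fin 2) F) : Matrix (Fin 2) (Fin 2) F) *ᵥ g.v) := rfl
@[simp] lemma inv_m (g : Aff F) : (g⁻¹).m = g.m⁻¹ := rfl

instance : Group (Aff F) where
  mul_assoc a b c := by
    ext : 1
    · simp only [mul_v, mul_m, Matrix.mulVec_add, Matrix.mulVec_mulVec, add_assoc, Units.val_mul]
    · simp only [mul_m, mul_assoc]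
  one_mul a := by ext : 1 <;> simp
  mul_one a := by ext : 1 <;> simp
  inv_mul_cancel a := by
    ext : 1 <;> simp [Matrix.mulVec_mulVec, ← Units.val_mul]

end Aff

/-- `C` is a perfect code of the Cayley graph `Cay(G, S)`:
`C` is independent and every vertex outside `C` has exactly one neighbor in `C`,
where `g` and `h` are adjacent iff `h * g⁻¹ ∈ S`. -/
def IsPerfectCode {G : Type*} [Group G] (S : Set G) (C : Set G) : Prop :=
  (∀ c ∈ C, ∀ c' ∈ C, c ≠ c' → c' * c⁻¹ ∉ S) ∧
  ∀ g ∉ C, ∃! c, c ∈ C ∧ c * g⁻¹ ∈ S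

/-- The subgroup `H_q` of translations by vectors with entries in the subfield. -/
def Hq (F K : Type*) [Field F] [Field K] [Algebra F K] : Set (Aff K) :=
  {g : Aff K | (∀ i, g.v i ∈ Set.range (algebraMap F K)) ∧ g.m = 1}

/-!
Let `W = F²` be the `F`-rational points of `V = K²`, a 2-dimensional subspace of the
4-dimensional `F`-space `V`. If every `U_A` (`A ∈ GL₂(K)`) is an `F`-complement of `W`, each
right coset of `H_q` meets `T = {(u, A) : u ∈ U_A}` exactly once, so `H_q` is a perfect code of
`Cay(AGL(2, q²), T \ {1})`, and this connection set is inverse-closed when `U_{A⁻¹} = A⁻¹ U_A`.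
For `A ≠ A⁻¹` take a common complement `U_A` of `W` and `A W` and put `U_{A⁻¹} = A⁻¹ U_A`.
An involution `A` needs an `A`-stable complement: in characteristic 2 the matrix `N = A - 1`
squares to zero, so if `N ≠ 0` it has an entry `N i j ≠ 0` with `i ≠ j`, and then
`span_F {d e_j, d N e_j}` is an `A`-stable complement of `W` whenever `d ∉ F` and `d N i j ∉ F`.
-/

open Module Submodule

theorem Submodule.exists_notMem_notMem {R M : Type*} [Ring R] [AddCommGroup M] [Module R M]
    {p q : Submodule R M} (hp : p ≠ ⊤) (hq : q ≠ ⊤) : ∃ x, x ∉ p ∧ x ∉ q := by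
  obtain ⟨x, hx⟩ : ∃ x, x ∉ p := not_forall.1 (mt eq_top_iff'.2 hp)
  obtain ⟨y, hy⟩ : ∃ y, y ∉ q := not_forall.1 (mt eq_top_iff'.2 hq)
  by_cases hxq : x ∈ q
  · by_cases hyp : y ∈ p
    · exact ⟨x + y, fun h => hx (by simpa using p.sub_mem h hyp),
        fun h => hy (by simpa using q.sub_mem h hxq)⟩
    · exact ⟨y, hyp, hy⟩
  · exact ⟨x, hx, hxq⟩

theorem IsCompl.sup_of_disjoint {α : Type*} [Lattice α] [BoundedOrder α] [IsModularLattice α]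
    {u w l : α} (h : IsCompl u (w ⊔ l)) (hl : Disjoint l w) : IsCompl (u ⊔ l) w :=
  ⟨Disjoint.disjoint_sup_left_of_disjoint_sup_right hl (sup_comm w l ▸ h.disjoint),
    codisjoint_iff.2 (by rw [sup_assoc, sup_comm l, h.codisjoint.eq_top])⟩

theorem Submodule.exists_isCompl_isCompl_of_finrank_eq {F V : Type*} [Field F]
    [AddCommGroup V] [Module F V] [FiniteDimensional F V] {W₁ W₂ : Submodule F V}
    (h : finrank F W₁ = finrank F W₂) : ∃ U : Submodule F V, IsCompl U W₁ ∧ IsCompl U W₂ := by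
  induction hk : finrank F V - finrank F W₁ generalizing W₁ W₂ with
  | zero =>
    have h₁ : W₁ = ⊤ := eq_top_of_finrank_eq (by have := W₁.finrank_le; omega)
    have h₂ : W₂ = ⊤ := eq_top_of_finrank_eq (by have := W₂.finrank_le; omega)
    exact ⟨⊥, h₁ ▸ isCompl_bot_top, h₂ ▸ isCompl_bot_top⟩
  | succ k ih =>
    have ne_top : ∀ W : Submodule F V, finrank F W = finrank F W₁ → W ≠ ⊤ := by
      rintro W hW rfl
      rw [finrank_top] at hW
      omega
    obtain ⟨v, hv₁, hv₂⟩ := exists_notMem_notMem (ne_top W₁ rfl) (ne_top W₂ h.symm)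
    have disj : ∀ {W : Submodule F V}, v ∉ W → Disjoint (span F {v}) W := fun hv =>
      (disjoint_span_singleton.2 fun h => absurd h hv).symm
    have finrank_sup : ∀ {W : Submodule F V}, v ∉ W →
        finrank F ↥(W ⊔ span F {v}) = finrank F W + 1 := fun {W} hv => by
      have := finrank_sup_add_finrank_inf_eq W (span F {v})
      rwa [(disj hv).symm.eq_bot, finrank_bot, add_zero,
        finrank_span_singleton (ne_of_mem_of_not_mem W.zero_mem hv).symm] at this
    obtain ⟨U, hU₁, hU₂⟩ := ih (W₁ := W₁ ⊔ span F {v}) (W₂ := W₂ ⊔ span F {v})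
      (by rw [finrank_sup hv₁, finrank_sup hv₂, h]) (by rw [finrank_sup hv₁]; omega)
    exact ⟨U ⊔ span F {v}, hU₁.sup_of_disjoint (disj hv₁), hU₂.sup_of_disjoint (disj hv₂)⟩

theorem exists_inv_compatible_choice {G X : Type*} [Group G] (act : G → X → X)
    (act_inv_act : ∀ g x, act g⁻¹ (act g x) = x) (P : G → X → Prop)
    (hP : ∀ g x, P g x → P g⁻¹ (act g⁻¹ x))
    (hex : ∀ g, ∃ x, P g x ∧ (g⁻¹ = g → act g x = x)) :
    ∃ u : G → X, ∀ g, P g (u g) ∧ u g⁻¹ = act g⁻¹ (u g) := by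
  classical
  let : LinearOrder G := WellOrderingRel.isWellOrder.linearOrder
  choose f hfP hfix using hex
  refine ⟨fun g => if g ≤ g⁻¹ then f g else act g (f g⁻¹), fun g => ?_⟩
  rcases lt_trichotomy g g⁻¹ with hlt | heq | hgt
  · simp only [hlt.le, if_true, inv_inv, not_le.2 hlt, if_false]
    exact ⟨hfP g, trivial⟩
  · simp only [← heq, le_refl, if_true]
    exact ⟨hfP g, (hfix g heq.symm).symm⟩
  · simp only [not_le.2 hgt, if_false, inv_inv, hgt.le, if_true, act_inv_act]
    exact ⟨by simpa only [inv_inv] using hP g⁻¹ _ (hfP g⁻¹), trivial⟩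

theorem CharTwo.sub_one_mul_sub_one_eq_zero {R : Type*} [Ring R] [CharP R 2] {a : R}
    (ha : a * a = 1) : (a - 1) * (a - 1) = 0 := by
  calc (a - 1) * (a - 1) = a * a - (a + a) + 1 := by noncomm_ring
    _ = 0 := by rw [ha, CharTwo.add_self_eq_zero, sub_zero, CharTwo.add_self_eq_zero]

theorem Matrix.exists_ne_apply_ne_zero_of_mul_self_eq_zero {n R : Type*} [Fintype n]
    [DecidableEq n] [Ring R] [NoZeroDivisors R] {N : Matrix n n R} (hN : N * N = 0)
    (hN0 : N ≠ 0) : ∃ i j, i ≠ j ∧ N i j ≠ 0 := by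
  by_contra! h
  have hdiag : Matrix.diagonal N.diag = N := IsDiag.diagonal_diag fun i j hij => h i j hij
  rw [← hdiag, diagonal_mul_diagonal, diagonal_eq_zero] at hN
  refine hN0 ?_
  rw [← hdiag, funext fun i => mul_self_eq_zero.1 (congrFun hN i), diagonal_zero]

theorem isPerfectCode_diff_one {G : Type*} [Group G] (H : Subgroup G) {T : Set G}
    (h1 : (1 : G) ∈ T) (hT : ∀ x : G, ∃! h, h ∈ H ∧ h * x ∈ T) :
    IsPerfectCode (T \ {1}) H := by
  refine ⟨fun c hc c' hc' _ ⟨_, hc1⟩ => hc1 ?_, fun g hg => ?_⟩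
  · exact (hT 1).unique ⟨H.mul_mem hc' (H.inv_mem hc), by rwa [mul_one]⟩ ⟨H.one_mem, by simpa⟩
  · obtain ⟨h, ⟨hH, hhT⟩, huniq⟩ := hT g⁻¹
    refine ⟨h, ⟨hH, hhT, fun hg1 => hg ?_⟩, fun y ⟨hy, hyT, _⟩ => huniq y ⟨hy, hyT⟩⟩
    rwa [← mul_inv_eq_one.1 hg1]

section RationalPoints

variable (F K : Type*) [CommSemiring F] [Semiring K] [Algebra F K]

def rationalPoints (n : Type*) : Submodule F (n → K) :=
  LinearMap.range ((Algebra.linearMap F K).compLeft n)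

variable {F K}

theorem mem_rationalPoints {n : Type*} {x : n → K} :
    x ∈ rationalPoints F K n ↔ ∀ i, x i ∈ Set.range (algebraMap F K) := by
  simp [rationalPoints, LinearMap.range_compLeft, Submodule.mem_pi]

end RationalPoints

theorem finrank_rationalPoints {F K : Type*} [Field F] [Ring K] [Nontrivial K] [Algebra F K]
    (n : Type*) [Fintype n] : finrank F (rationalPoints F K n) = Fintype.card n := by
  rw [rationalPoints, LinearMap.finrank_range_of_inj, finrank_fintype_fun_eq_card]
  exact fun x y h => funext fun i => (algebraMap F K).injective (congrFun h i)

noncomputable def mulVecEquiv (F : Type*) {K n : Type*} [CommSemiring F] [CommRing K]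
    [Algebra F K] [Fintype n] [DecidableEq n] : GL n K →* ((n → K) ≃ₗ[F] (n → K)) where
  toFun A := (LinearMap.GeneralLinearGroup.generalLinearEquiv K (n → K)
    (Matrix.GeneralLinearGroup.toLin A)).restrictScalars F
  map_one' := by ext; simp
  map_mul' A B := by ext; simp [Matrix.mulVec_mulVec]

@[simp] theorem mulVecEquiv_apply (F : Type*) {K n : Type*} [CommSemiring F] [CommRing K]
    [Algebra F K] [Fintype n] [DecidableEq n] (A : GL n K) (x : n → K) :
    mulVecEquiv F A x = (A : Matrix n n K) *ᵥ x := rfl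

theorem exists_notMem_bot_mul_notMem_bot {F K : Type*} [Field F] [Field K] [Algebra F K]
    (hK : (⊥ : Subalgebra F K) ≠ ⊤) {c : K} (hc : c ≠ 0) :
    ∃ d : K, d ∉ (⊥ : Subalgebra F K) ∧ d * c ∉ (⊥ : Subalgebra F K) := by
  set p := Subalgebra.toSubmodule (⊥ : Subalgebra F K)
  have hp : p ≠ ⊤ := by rwa [Ne, Algebra.toSubmodule_eq_top]
  have hq : p.comap (LinearMap.mulRight F c) ≠ ⊤ := by
    intro h
    refine hp (eq_top_iff.2 fun x _ => ?_)
    simpa [hc] using (h ▸ mem_top : x / c ∈ p.comap (LinearMap.mulRight F c))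
  exact exists_notMem_notMem hp hq

theorem isCompl_span_rationalPoints {F K : Type*} [Field F] [Field K] [Algebra F K]
    (hK : finrank F K = 2) {i j : Fin 2} (hij : i ≠ j) {n : Fin 2 → K} {d : K}
    (hd : d ∉ (⊥ : Subalgebra F K)) (hdn : d * n i ∉ (⊥ : Subalgebra F K)) :
    IsCompl (span F (Set.range ![d • Pi.single j 1, d • n])) (rationalPoints F K (Fin 2)) := by
  have : Module.Finite F K := Module.finite_of_finrank_eq_succ hK
  have smul_mem_bot {s : F} {x : K} (hs : s ≠ 0) (h : s • x ∈ (⊥ : Subalgebra F K)) :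
      x ∈ (⊥ : Subalgebra F K) := by
    simpa [hs] using (⊥ : Subalgebra F K).smul_mem h s⁻¹
  have key : ∀ s t : F, s • d • Pi.single j 1 + t • d • n ∈ rationalPoints F K (Fin 2) →
      s = 0 ∧ t = 0 := by
    intro s t hW
    have coord : ∀ k,
        s • (d * (Pi.single j 1 : Fin 2 → K) k) + t • (d * n k) ∈ (⊥ : Subalgebra F K) :=
      fun k => by simpa [Algebra.mem_bot] using mem_rationalPoints.1 hW k
    have ht : t = 0 := by
      by_contra ht
      exact hdn (smul_mem_bot ht (by simpa [Pi.single_eq_of_ne hij] using coord i))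
    subst ht
    refine ⟨by_contra fun hs => hd (smul_mem_bot hs (by simpa using coord j)), rfl⟩
  have hli : LinearIndependent F ![d • Pi.single j 1, d • n] :=
    LinearIndependent.pair_iff.2 fun s t hst => key s t (hst ▸ zero_mem _)
  rw [isCompl_iff_disjoint]
  · refine disjoint_def.2 fun x hxU hxW => ?_
    obtain ⟨c, rfl⟩ := (mem_span_range_iff_exists_fun F).1 hxU
    simp only [Fin.sum_univ_two, Matrix.cons_val_zero, Matrix.cons_val_one] at hxW ⊢
    obtain ⟨h0, h1⟩ := key _ _ hxW
    simp [h0, h1]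
  · rw [finrank_span_eq_card hli, finrank_rationalPoints, finrank_pi_fintype]
    simp [hK]

theorem exists_isCompl_rationalPoints_map_eq_self {F K : Type*} [Field F] [Field K]
    [Algebra F K] [CharP K 2] (hK : finrank F K = 2) (A : GL (Fin 2) K) (hA : A * A = 1) :
    ∃ U : Submodule F (Fin 2 → K),
      IsCompl U (rationalPoints F K (Fin 2)) ∧ U.map (mulVecEquiv F A).toLinearMap = U := by
  set N : Matrix (Fin 2) (Fin 2) K := A - 1
  have hAN : ∀ x, mulVecEquiv F A x = x + N *ᵥ x := fun x => by
    rw [mulVecEquiv_apply, Matrix.sub_mulVec, Matrix.one_mulVec, add_sub_cancel]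
  have hNN : N * N = 0 :=
    CharTwo.sub_one_mul_sub_one_eq_zero (by rw [← Units.val_mul, hA, Units.val_one])
  have map_eq_of_le : ∀ U : Submodule F (Fin 2 → K), U.map (mulVecEquiv F A).toLinearMap ≤ U →
      U.map (mulVecEquiv F A).toLinearMap = U := fun U hU => by
    refine le_antisymm hU fun x hx => ⟨mulVecEquiv F A x, hU ⟨x, hx, rfl⟩, ?_⟩
    rw [LinearEquiv.coe_coe, ← LinearEquiv.mul_apply, ← map_mul, hA, map_one]
    rfl
  by_cases hN0 : N = 0
  · obtain ⟨U, hU⟩ := (rationalPoints F K (Fin 2)).exists_isCompl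
    refine ⟨U, hU.symm, map_eq_of_le U ?_⟩
    rintro _ ⟨x, hx, rfl⟩
    simpa [hAN, hN0] using hx
  obtain ⟨i, j, hij, hNij⟩ := N.exists_ne_apply_ne_zero_of_mul_self_eq_zero hNN hN0
  set n := N *ᵥ Pi.single j 1
  have hni : n i = N i j := by simp [n]
  have hNn : N *ᵥ n = 0 := by rw [Matrix.mulVec_mulVec, hNN, Matrix.zero_mulVec]
  obtain ⟨d, hd, hdn⟩ := exists_notMem_bot_mul_notMem_bot (F := F)
    (fun h => by simp [Subalgebra.bot_eq_top_iff_finrank_eq_one.1 h] at hK) (hni ▸ hNij)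
  refine ⟨_, isCompl_span_rationalPoints hK hij hd hdn, map_eq_of_le _ ?_⟩
  rw [map_span_le]
  simp only [Set.forall_mem_range, Fin.forall_fin_two, Matrix.cons_val_zero,
    Matrix.cons_val_one, LinearEquiv.coe_coe, hAN, Matrix.mulVec_smul, hNn, smul_zero, add_zero]
  exact ⟨add_mem (subset_span ⟨0, rfl⟩) (subset_span ⟨1, rfl⟩), subset_span ⟨1, rfl⟩⟩

theorem exists_isCompl_rationalPoints_family {F K : Type*} [Field F] [Field K]
    [Algebra F K] [CharP K 2] (hK : finrank F K = 2) :
    ∃ U : GL (Fin 2) K → Submodule F (Fin 2 → K), ∀ A,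
      IsCompl (U A) (rationalPoints F K (Fin 2)) ∧
        U A⁻¹ = (U A).map (mulVecEquiv F A⁻¹).toLinearMap := by
  have : Module.Finite F K := Module.finite_of_finrank_eq_succ hK
  set W := rationalPoints F K (Fin 2)
  set act : GL (Fin 2) K → Submodule F (Fin 2 → K) → Submodule F (Fin 2 → K) :=
    fun A U => U.map (mulVecEquiv F A).toLinearMap
  have act_inv_act : ∀ A U, act A⁻¹ (act A U) = U := fun A U => by
    simp only [act]
    rw [← map_comp, ← LinearEquiv.coe_trans, ← LinearEquiv.mul_eq_trans, ← map_mul,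
      inv_mul_cancel, map_one]
    exact map_id U
  have isCompl_act : ∀ A {U V}, IsCompl U V → IsCompl (act A U) (act A V) :=
    fun A _ _ h => (orderIsoMapComap (mulVecEquiv F A)).isCompl_iff.1 h
  obtain ⟨U, hU⟩ := exists_inv_compatible_choice act act_inv_act
    (fun A U => IsCompl U W ∧ IsCompl U (act A W))
    (fun A U ⟨hW, hAW⟩ => ⟨act_inv_act A W ▸ isCompl_act A⁻¹ hAW, isCompl_act A⁻¹ hW⟩)
    (fun A => by
      by_cases hA : A⁻¹ = A
      · obtain ⟨U, hUW, hAU⟩ :=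
          exists_isCompl_rationalPoints_map_eq_self hK A (inv_eq_iff_mul_eq_one.1 hA)
        exact ⟨U, ⟨hUW, hAU ▸ isCompl_act A hUW⟩, fun _ => hAU⟩
      · obtain ⟨U, hUW, hUAW⟩ := exists_isCompl_isCompl_of_finrank_eq
          (LinearEquiv.finrank_map_eq (mulVecEquiv F A) W).symm
        exact ⟨U, ⟨hUW, hUAW⟩, fun h => absurd h hA⟩)
  exact ⟨U, fun A => ⟨(hU A).1.1, (hU A).2⟩⟩

namespace Aff

variable {K R : Type*} [Field K] [Ring R] [Module R K]

def translations (W : Submodule R (Fin 2 → K)) : Subgroup (Aff K) where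
  carrier := {g | g.v ∈ W ∧ g.m = 1}
  mul_mem' := by
    rintro a b ⟨ha, ha1⟩ ⟨hb, hb1⟩
    exact ⟨by simpa [ha1] using add_mem ha hb, by simp [ha1, hb1]⟩
  one_mem' := ⟨W.zero_mem, rfl⟩
  inv_mem' := by
    rintro a ⟨ha, ha1⟩
    exact ⟨by simpa [ha1] using neg_mem ha, by simp [ha1]⟩

theorem existsUnique_translations_mul_mem {W : Submodule R (Fin 2 → K)}
    {U : GL (Fin 2) K → Submodule R (Fin 2 → K)} (hU : ∀ A, IsCompl (U A) W) (x : Aff K) :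
    ∃! h, h ∈ translations W ∧ (h * x).v ∈ U (h * x).m := by
  have mul_x : ∀ h ∈ translations W, (h * x).v = h.v + x.v ∧ (h * x).m = x.m := by
    rintro h ⟨-, h1⟩
    simp [h1]
  obtain ⟨u, hu, w, hw, hx⟩ := Submodule.mem_sup.1 ((hU x.m).codisjoint.eq_top ▸ mem_top :
    x.v ∈ U x.m ⊔ W)
  have hw' : (⟨-w, 1⟩ : Aff K) ∈ translations W := ⟨neg_mem hw, rfl⟩
  refine ⟨⟨-w, 1⟩, ⟨hw', ?_⟩, fun h ⟨hh, hhU⟩ => ?_⟩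
  · rw [(mul_x _ hw').1, (mul_x _ hw').2, ← hx]
    convert hu using 1
    show -w + (u + w) = u
    abel
  · rw [(mul_x h hh).1, (mul_x h hh).2, ← hx, ← add_assoc] at hhU
    have hU' : h.v + w ∈ U x.m := by
      convert sub_mem hhU hu using 1
      abel
    have h0 := Submodule.disjoint_def.1 (hU x.m).disjoint _ hU' (add_mem hh.1 hw)
    exact Aff.ext (eq_neg_of_add_eq_zero_left h0) hh.2

theorem coe_translations_rationalPoints (F : Type*) [Field F] [Algebra F K] :
    (translations (rationalPoints F K (Fin 2)) : Set (Aff K)) = Hq F K := by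
  ext g
  simp [translations, Hq, mem_rationalPoints]

end Aff

theorem stmt12_general {F K : Type*} [Field F] [Field K] [Algebra F K] [Fintype F]
    (n : ℕ) (hF : Fintype.card F = 2 ^ n)
    (hK : Module.finrank F K = 2) :
    ∃ S : Set (Aff K), (∀ s ∈ S, s⁻¹ ∈ S) ∧ (1 : Aff K) ∉ S ∧
      IsPerfectCode S (Hq F K) := by
  have := charP_of_card_eq_prime_pow hF
  have := charP_of_injective_algebraMap' F (A := K) 2
  obtain ⟨U, hU⟩ := exists_isCompl_rationalPoints_family hK
  refine ⟨{g | g.v ∈ U g.m} \ {1}, ?_, fun h => h.2 rfl, ?_⟩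
  · rintro g ⟨hg, hg1⟩
    refine ⟨?_, fun h => hg1 (inv_eq_one.1 h)⟩
    show -(_ *ᵥ g.v) ∈ U g.m⁻¹
    rw [(hU g.m).2]
    exact neg_mem (mem_map_of_mem hg)
  · rw [← Aff.coe_translations_rationalPoints]
    exact isPerfectCode_diff_one _ (zero_mem (U 1))
      (Aff.existsUnique_translations_mul_mem fun A => (hU A).1)

/-- For `q = 2^n` (`n ≥ 1`), the subgroup `H_q` of `AGL(2, q²)` is a subgroup
perfect code: there is an inverse-closed `S ⊆ AGL(2,q²) \ {e}` such that `H_q`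
is a perfect code of `Cay(AGL(2,q²), S)`. -/
theorem stmt12 {F K : Type*} [Field F] [Field K] [Algebra F K] [Fintype F]
    (n : ℕ) (hn : 1 ≤ n) (hF : Fintype.card F = 2 ^ n)
    (hK : Module.finrank F K = 2) :
    ∃ S : Set (Aff K), (∀ s ∈ S, s⁻¹ ∈ S) ∧ (1 : Aff K) ∉ S ∧
      IsPerfectCode S (Hq F K) :=
  stmt12_general n hF hK
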